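/- arXiv:1310.1048 — 3 statements merged into one kernel-verified Lean document; each statement's English description precedes it below -/
import Mathlib

section
/- For all n ≥ 0, p_n(α_{n+2}) = α_{n+2}^{(n+2)/2}, where α_{n+2} = 4cos²(π/(n+4)). -/
/-! At `x = 4 cos² θ` the recurrence for `p` matches the recurrence
`sin (y + 2θ) = 2 cos θ · sin (y + θ) - sin y`, which gives the closed form
`p n (4 cos² θ) · sin θ = (2 cos θ)^(n+1) · sin ((n + 2) θ)`. For `θ = π / (n + 4)` one has
`sin ((n + 2) θ) = sin (2θ) = 2 sin θ cos θ`, so `p n (α_{n+2}) = (2 cos θ)^(n+2)`, and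
`2 cos θ > 0` is the square root of `α_{n+2}`. -/

open Real Finset

noncomputable def p : ℕ → ℝ → ℝ
  | 0, x => x
  | 1, x => x * (x - 1)
  | (n+2), x => x * (p (n+1) x - p n x)

lemma sin_add_two_mul_eq (x θ : ℝ) : sin (x + 2 * θ) = 2 * cos θ * sin (x + θ) - sin x := by
  have h_add := sin_add (x + θ) θ
  have h_sub := sin_sub (x + θ) θ
  rw [add_sub_cancel_right] at h_sub
  rw [two_mul, ← add_assoc]
  linarith

lemma p_four_mul_cos_sq_mul_sin (θ : ℝ) (n : ℕ) :
    p n (4 * cos θ ^ 2) * sin θ = (2 * cos θ) ^ (n + 1) * sin (((n : ℝ) + 2) * θ) := by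
  induction n using Nat.twoStepInduction with
  | zero =>
    simp only [p, Nat.cast_zero, zero_add, pow_one, sin_two_mul]
    ring
  | one =>
    rw [p, Nat.cast_one, show ((1 : ℝ) + 2) * θ = 3 * θ by ring, sin_three_mul]
    linear_combination (16 * cos θ ^ 2 * sin θ) * sin_sq_add_cos_sq θ
  | more k ih₀ ih₁ =>
    have h_rec := sin_add_two_mul_eq (((k : ℝ) + 2) * θ) θ
    rw [show ((k : ℝ) + 2) * θ + 2 * θ = (((k + 2 : ℕ) : ℝ) + 2) * θ by push_cast; ring,
      show ((k : ℝ) + 2) * θ + θ = (((k + 1 : ℕ) : ℝ) + 2) * θ by push_cast; ring] at h_rec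
    rw [p]
    linear_combination (4 * cos θ ^ 2) * ih₁ - (4 * cos θ ^ 2) * ih₀ - (2 * cos θ) ^ (k + 3) * h_rec

lemma p_four_mul_cos_sq_pi_div (n : ℕ) :
    p n (4 * cos (π / ((n : ℝ) + 4)) ^ 2) = (2 * cos (π / ((n : ℝ) + 4))) ^ (n + 2) := by
  set θ := π / ((n : ℝ) + 4) with hθ
  have hθ_pos : 0 < θ := by positivity
  have hθ_lt : θ < π := div_lt_self pi_pos (by linarith [n.cast_nonneg (α := ℝ)])
  have h_sin : sin (((n : ℝ) + 2) * θ) = 2 * sin θ * cos θ := by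
    have : ((n : ℝ) + 2) * θ = π - 2 * θ := by
      rw [hθ]; field_simp; ring
    rw [this, sin_pi_sub, sin_two_mul]
  have h := p_four_mul_cos_sq_mul_sin θ n
  rw [h_sin] at h
  refine mul_right_cancel₀ (sin_pos_of_pos_of_lt_pi hθ_pos hθ_lt).ne' ?_
  linear_combination h

lemma cos_pi_div_pos (n : ℕ) : 0 < cos (π / ((n : ℝ) + 4)) := by
  apply cos_pos_of_mem_Ioo
  constructor
  · linarith [pi_pos, show 0 < π / ((n : ℝ) + 4) by positivity]
  · rw [div_lt_div_iff_of_pos_left pi_pos (by positivity) two_pos]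
    linarith [n.cast_nonneg (α := ℝ)]

theorem stmt_4 (n : ℕ) :
    p n (4 * Real.cos (Real.pi / ((n : ℝ) + 4)) ^ 2) =
      (4 * Real.cos (Real.pi / ((n : ℝ) + 4)) ^ 2) ^ (((n : ℝ) + 2) / 2) := by
  have h_nonneg : 0 ≤ 2 * cos (π / ((n : ℝ) + 4)) := (mul_pos two_pos (cos_pi_div_pos n)).le
  rw [p_four_mul_cos_sq_pi_div,
    show 4 * cos (π / ((n : ℝ) + 4)) ^ 2 = (2 * cos (π / ((n : ℝ) + 4))) ^ 2 by ring,
    rpow_div_two_eq_sqrt _ (sq_nonneg _), sqrt_sq h_nonneg]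
  exact_mod_cast (rpow_natCast _ (n + 2)).symm
end

section
/- For all n ≥ 0, 2^n ≤ p_n(α_{n+1}) and p_n(α_{n+2}) ≤ 2^{n+2}, where α_m = 4cos²(π/(m+2)). -/
open Real Finset

/-! Under `x = 4 cos² θ` the recursion for `p` becomes that of the Chebyshev polynomials of
the second kind: `p n (4 y²) = (2y)^(n+1) U_{n+1}(y)`, hence
`sin θ · p n (4 cos² θ) = (2 cos θ)^(n+1) sin ((n+2)θ)`. For `θ = π/(n+3)` and `θ = π/(n+4)`
the sines cancel, leaving `(2 cos θ)^(n+1)` and `(2 cos θ)^(n+2)`. The upper bound is then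
`0 ≤ cos θ ≤ 1`. The lower bound reduces to `cos (π/(n+3))^(n+1) ≥ 1/2`, an equality for
`n = 0, 1`; for `n ≥ 2` it follows from `cos t ≥ 1 - t²/2`, `π² ≤ 10` and Bernoulli's
inequality, after checking `n = 2, 3, 4` numerically. -/

open Polynomial Chebyshev

theorem p_four_mul_sq (n : ℕ) (x : ℝ) :
    p n (4 * x ^ 2) = (2 * x) ^ (n + 1) * (U ℝ (n + 1)).eval x := by
  induction n using Nat.twoStepInduction with
  | zero => simp only [p, CharP.cast_eq_zero, zero_add, U_one, eval_mul, eval_ofNat, eval_X]; ring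
  | one =>
    rw [show ((1 : ℕ) : ℤ) + 1 = 2 by norm_num, U_two]
    simp only [p, eval_sub, eval_mul, eval_pow, eval_ofNat, eval_X, eval_one]
    ring
  | more n ihn ihn1 =>
    have hU : (U ℝ (n + 3)).eval x = 2 * x * (U ℝ (n + 2)).eval x - (U ℝ (n + 1)).eval x := by
      rw [show (n : ℤ) + 3 = n + 1 + 2 by ring, U_add_two, add_assoc, one_add_one_eq_two]
      simp only [eval_sub, eval_mul, eval_ofNat, eval_X]
    push_cast at ihn1 ⊢
    rw [p, ihn, ihn1, show (n : ℤ) + 1 + 1 = n + 2 by ring, show (n : ℤ) + 2 + 1 = n + 3 by ring,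
      hU]
    ring

theorem sin_mul_p_four_mul_cos_sq (n : ℕ) (x : ℝ) :
    sin x * p n (4 * cos x ^ 2) = (2 * cos x) ^ (n + 1) * sin ((n + 2) * x) := by
  have h := U_real_cos x (n + 1)
  push_cast at h
  rw [show (n : ℝ) + 1 + 1 = n + 2 by ring] at h
  rw [p_four_mul_sq, ← h]
  ring

theorem sin_pi_div_pos {x : ℝ} (hx : 1 < x) : 0 < sin (π / x) :=
  sin_pos_of_pos_of_lt_pi (div_pos pi_pos (by linarith)) (div_lt_self pi_pos hx)

theorem p_four_mul_cos_sq_pi_div_add_three (n : ℕ) :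
    p n (4 * cos (π / (n + 3)) ^ 2) = (2 * cos (π / (n + 3))) ^ (n + 1) := by
  have hs := sin_pi_div_pos (x := n + 3) (by linarith [n.cast_nonneg (α := ℝ)])
  have h := sin_mul_p_four_mul_cos_sq n (π / (n + 3))
  rw [show ((n : ℝ) + 2) * (π / (n + 3)) = π - π / (n + 3) by field_simp; ring,
    sin_pi_sub] at h
  exact mul_left_cancel₀ hs.ne' (h.trans (mul_comm _ _))

theorem p_four_mul_cos_sq_pi_div_add_four (n : ℕ) :
    p n (4 * cos (π / (n + 4)) ^ 2) = (2 * cos (π / (n + 4))) ^ (n + 2) := by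
  have hs := sin_pi_div_pos (x := n + 4) (by linarith [n.cast_nonneg (α := ℝ)])
  have h := sin_mul_p_four_mul_cos_sq n (π / (n + 4))
  rw [show ((n : ℝ) + 2) * (π / (n + 4)) = π - 2 * (π / (n + 4)) by field_simp; ring,
    sin_pi_sub, sin_two_mul] at h
  refine mul_left_cancel₀ hs.ne' (h.trans ?_)
  ring

theorem half_le_one_sub_five_div_sq_pow {n : ℕ} (hn : 2 ≤ n) :
    1 / 2 ≤ (1 - 5 / ((n : ℝ) + 3) ^ 2) ^ (n + 1) := by
  rcases le_or_gt n 4 with hn4 | hn4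
  · interval_cases n <;> norm_num
  · have hn' : (5 : ℝ) ≤ n := by exact_mod_cast hn4
    have hpos : (0 : ℝ) < ((n : ℝ) + 3) ^ 2 := by positivity
    have hsmall : 5 / ((n : ℝ) + 3) ^ 2 ≤ 1 := by rw [div_le_one hpos]; nlinarith
    calc (1 : ℝ) / 2 ≤ 1 - (n + 1) * (5 / ((n : ℝ) + 3) ^ 2) := by
          rw [mul_div_assoc', le_sub_comm, div_le_iff₀ hpos]
          nlinarith
      _ = 1 + ((n + 1 : ℕ) : ℝ) * ((1 - 5 / ((n : ℝ) + 3) ^ 2) - 1) := by push_cast; ring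
      _ ≤ (1 - 5 / ((n : ℝ) + 3) ^ 2) ^ (n + 1) := one_add_mul_sub_le_pow (by linarith) _

theorem half_le_cos_pi_div_pow (n : ℕ) : 1 / 2 ≤ cos (π / (n + 3)) ^ (n + 1) := by
  rcases lt_or_ge n 2 with hn | hn
  · interval_cases n
    · norm_num [cos_pi_div_three]
    · norm_num [show (1 : ℝ) + 3 = 4 by norm_num, cos_pi_div_four, div_pow]
  · have hpi : π ^ 2 ≤ 10 := by nlinarith [pi_lt_d2, pi_pos]
    have hpos : (0 : ℝ) < ((n : ℝ) + 3) ^ 2 := by positivity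
    have hcos : 1 - 5 / ((n : ℝ) + 3) ^ 2 ≤ cos (π / (n + 3)) := by
      calc 1 - 5 / ((n : ℝ) + 3) ^ 2 ≤ 1 - (π / (n + 3)) ^ 2 / 2 := by
            rw [div_pow, div_div, sub_le_sub_iff_left, div_le_div_iff₀ (by positivity) hpos]
            nlinarith
        _ ≤ cos (π / (n + 3)) := one_sub_sq_div_two_le_cos
    have hbase : 0 ≤ 1 - 5 / ((n : ℝ) + 3) ^ 2 := by
      rw [sub_nonneg, div_le_one hpos]
      nlinarith [(by exact_mod_cast hn : (2 : ℝ) ≤ n)]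
    exact (half_le_one_sub_five_div_sq_pow hn).trans (pow_le_pow_left₀ hbase hcos _)

theorem cos_pi_div_nonneg {x : ℝ} (hx : 2 ≤ x) : 0 ≤ cos (π / x) := by
  have hnonneg : 0 ≤ π / x := div_nonneg pi_pos.le (by linarith)
  exact cos_nonneg_of_neg_pi_div_two_le_of_le (by linarith [pi_pos])
    (div_le_div_of_nonneg_left pi_pos.le two_pos hx)

theorem stmt_11 (n : ℕ) :
    (2 : ℝ) ^ n ≤ p n (4 * Real.cos (Real.pi / ((n : ℝ) + 3)) ^ 2) ∧
    p n (4 * Real.cos (Real.pi / ((n : ℝ) + 4)) ^ 2) ≤ (2 : ℝ) ^ (n + 2) := by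
  constructor
  · rw [p_four_mul_cos_sq_pi_div_add_three, mul_pow]
    calc (2 : ℝ) ^ n = 2 ^ (n + 1) * (1 / 2) := by rw [pow_succ]; ring
      _ ≤ 2 ^ (n + 1) * cos (π / (n + 3)) ^ (n + 1) := by
        gcongr
        exact half_le_cos_pi_div_pow n
  · rw [p_four_mul_cos_sq_pi_div_add_four]
    have hcos := cos_pi_div_nonneg (x := n + 4) (by linarith [n.cast_nonneg (α := ℝ)])
    exact pow_le_pow_left₀ (by positivity) (by linarith [cos_le_one (π / (n + 4))]) _
end

section
/- For real a_0 with a_0 ≥ 4cos²(π/(n+3)) for some n ≥ 1, and a_i := p_i(a_0) for 0 ≤ i ≤ n, the sequence satisfies, for all 0 ≤ i ≤ n−2: 1 + 2·(Σ_{k=0}^{i+1} a_k)/a_i = 2a_0 + 1, i.e., a_{i+1} = a_0·a_i − Σ_{k=0}^{i} a_k. -/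
open Real Finset

/-!
Telescoping the recursion gives `∑_{k ≤ i+1} p_k(x) = x · p_i(x)`, which is both identities once
`p_i(a₀) ≠ 0`. For positivity, write `a₀ = 4 cos² θ` with `0 < θ ≤ π/(n+3)` (or `a₀ ≥ 4`): then
`p_i(a₀) · sin θ = (2 cos θ)^(i+1) · sin ((i+2) θ)`, and `(i+2) θ < π` for `i ≤ n`.
-/

lemma sum_range_add_two_p (x : ℝ) (i : ℕ) : ∑ k ∈ range (i + 2), p k x = x * p i x := by
  induction i with
  | zero =>
    simp only [zero_add, sum_range_succ, range_one, sum_singleton, p]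
    ring
  | succ i ih =>
    rw [sum_range_succ, ih]
    simp only [p]
    ring

lemma p_mul_sin (θ : ℝ) (i : ℕ) :
    p i (4 * cos θ ^ 2) * sin θ = (2 * cos θ) ^ (i + 1) * sin ((i + 2) * θ) := by
  induction i using Nat.twoStepInduction with
  | zero =>
    simp only [p, CharP.cast_eq_zero, zero_add, sin_two_mul]
    ring
  | one =>
    simp only [p, Nat.cast_one, show ((1 : ℝ) + 2) * θ = 3 * θ by ring, sin_three_mul]
    linear_combination 16 * cos θ ^ 2 * sin θ * sin_sq_add_cos_sq θ
  | more k ih₀ ih₁ =>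
    -- `sin ((k+4)θ) + sin ((k+2)θ) = 2 cos θ · sin ((k+3)θ)`
    have hadd := sin_add ((k + 3) * θ) θ
    have hsub := sin_sub ((k + 3) * θ) θ
    simp only [p]
    push_cast at ih₀ ih₁ ⊢
    rw [show ((k : ℝ) + 3) * θ + θ = (k + 2 + 2) * θ by ring,
      show ((k : ℝ) + 3) * θ - θ = (k + 2) * θ by ring] at *
    rw [show ((k : ℝ) + 1 + 2) * θ = (k + 3) * θ by ring] at ih₁
    linear_combination 4 * cos θ ^ 2 * (ih₁ - ih₀) - (2 * cos θ) ^ (k + 3) * (hadd + hsub)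

lemma p_pos_and_two_mul_le_of_four_le {x : ℝ} (hx : 4 ≤ x) (i : ℕ) :
    0 < p i x ∧ 2 * p i x ≤ p (i + 1) x := by
  induction i with
  | zero => simp only [p]; constructor <;> nlinarith
  | succ i ih =>
    obtain ⟨hpos, hle⟩ := ih
    refine ⟨by linarith, ?_⟩
    simp only [p] at hle ⊢
    nlinarith

lemma p_four_mul_cos_sq_pos {θ : ℝ} {i : ℕ} (hθ : 0 < θ) (hiθ : (i + 2) * θ < π) :
    0 < p i (4 * cos θ ^ 2) := by
  have hθπ : θ < π / 2 := by nlinarith [(Nat.cast_nonneg i : (0 : ℝ) ≤ i)]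
  have hcos : 0 < cos θ := cos_pos_of_mem_Ioo ⟨by linarith, hθπ⟩
  have hsin : 0 < sin θ := sin_pos_of_pos_of_lt_pi hθ (by linarith)
  have hprod : 0 < p i (4 * cos θ ^ 2) * sin θ := by
    rw [p_mul_sin]
    exact mul_pos (by positivity) (sin_pos_of_pos_of_lt_pi (by positivity) hiθ)
  exact pos_of_mul_pos_left hprod hsin.le

lemma exists_four_mul_cos_sq_eq {θ₀ x : ℝ} (hθ₀ : 0 ≤ θ₀) (hθ₀π : θ₀ ≤ π / 2)
    (hx : 4 * cos θ₀ ^ 2 ≤ x) (hx4 : x < 4) :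
    ∃ θ, 0 < θ ∧ θ ≤ θ₀ ∧ 4 * cos θ ^ 2 = x := by
  have hcos : 0 ≤ cos θ₀ := cos_nonneg_of_mem_Icc ⟨by linarith [pi_pos], hθ₀π⟩
  have hx₀ : 0 ≤ x := le_trans (by positivity) hx
  have hcos_le : cos θ₀ ≤ √x / 2 := by
    rw [le_div_iff₀ two_pos, le_sqrt (by positivity) hx₀]
    linarith
  have hlt : √x / 2 < 1 := by
    rw [div_lt_one two_pos, sqrt_lt' two_pos]
    linarith
  refine ⟨arccos (√x / 2), arccos_pos.2 hlt, ?_, ?_⟩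
  · calc arccos (√x / 2) ≤ arccos (cos θ₀) := arccos_le_arccos hcos_le
      _ = θ₀ := arccos_cos hθ₀ (by linarith [pi_pos])
  · rw [cos_arccos (by linarith [hcos]) hlt.le, div_pow, sq_sqrt hx₀]
    ring

lemma p_pos_of_four_mul_cos_sq_le {n i : ℕ} {x : ℝ} (hx : 4 * cos (π / (n + 3)) ^ 2 ≤ x)
    (hi : i ≤ n) : 0 < p i x := by
  rcases le_or_gt 4 x with hx4 | hx4
  · exact (p_pos_and_two_mul_le_of_four_le hx4 i).1
  have hn : (0 : ℝ) < n + 3 := by positivity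
  have hθ₀π : π / (n + 3) ≤ π / 2 := div_le_div_of_nonneg_left pi_pos.le two_pos (by linarith)
  obtain ⟨θ, hθ, hθθ₀, rfl⟩ := exists_four_mul_cos_sq_eq (by positivity) hθ₀π hx hx4
  refine p_four_mul_cos_sq_pos hθ ?_
  have hin : (i : ℝ) ≤ n := Nat.cast_le.2 hi
  calc (i + 2) * θ ≤ (n + 2) * (π / (n + 3)) := by gcongr
    _ < π := by rw [mul_div_assoc', div_lt_iff₀ hn]; nlinarith [pi_pos]

theorem stmt_18 (n : ℕ) (hn : 1 ≤ n) (a₀ : ℝ)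
    (ha : a₀ ≥ 4 * Real.cos (Real.pi / ((n : ℝ) + 3)) ^ 2)
    (a : ℕ → ℝ) (hdef : ∀ i, i ≤ n → a i = p i a₀) :
    ∀ i : ℕ, i ≤ n - 2 →
      (1 + 2 * (∑ k ∈ Finset.range (i + 2), a k) / a i = 2 * a₀ + 1 ∧
       a (i + 1) = a₀ * a i - ∑ k ∈ Finset.range (i + 1), a k) := by
  intro i hi
  have hai : a i = p i a₀ := hdef i (by omega)
  have hsum : ∑ k ∈ range (i + 2), a k = a₀ * a i := by
    rw [sum_congr rfl fun k hk => hdef k (by rw [mem_range] at hk; omega), sum_range_add_two_p, hai]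
  have hpos : 0 < a i := hai ▸ p_pos_of_four_mul_cos_sq_le ha (by omega)
  refine ⟨?_, ?_⟩
  · rw [hsum]
    field_simp
    ring
  · rw [sum_range_succ] at hsum
    linarith
end
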